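/- For every x ∈ [0, π/2], sin²x ≥ 1 + (x − π/2)/1.38; equivalently, 1.38·cos²x ≤ π/2 − x. -/

import Mathlib

open Real

private lemma nonneg_of_deriv_nonneg (f f' : ℝ → ℝ) (hder : ∀ t, HasDerivAt f (f' t) t)
    (h0 : f 0 = 0) (hpos : ∀ t, 0 ≤ t → 0 ≤ f' t) : ∀ t, 0 ≤ t → 0 ≤ f t := by
  intro t ht
  have hmon : MonotoneOn f (Set.Ici (0:ℝ)) := by
    apply monotoneOn_of_deriv_nonneg (convex_Ici 0)
    · exact fun u _ => (hder u).continuousAt.continuousWithinAt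
    · intro u hu
      exact (hder u).differentiableAt.differentiableWithinAt
    · intro u hu
      rw [interior_Ici] at hu
      rw [(hder u).deriv]
      exact hpos u hu.le
  have := hmon Set.self_mem_Ici (Set.mem_Ici.2 ht) ht
  linarith [this, h0.symm.le]

private lemma sin_ge_poly3 : ∀ t : ℝ, 0 ≤ t → t - t^3/6 ≤ Real.sin t := by
  have := nonneg_of_deriv_nonneg (fun u => Real.sin u - (u - u^3/6))
    (fun u => Real.cos u - (1 - u^2/2)) ?_ (by norm_num) ?_
  · intro t ht; linarith [this t ht]
  · intro u
    have h := (Real.hasDerivAt_sin u).sub ((hasDerivAt_id' u).sub ((hasDerivAt_pow 3 u).div_const 6))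
    exact h.congr_deriv (by push_cast; ring)
  · intro u hu; linarith [Real.one_sub_sq_div_two_le_cos (x := u)]

private lemma cos_le_poly4 : ∀ t : ℝ, 0 ≤ t → Real.cos t ≤ 1 - t^2/2 + t^4/24 := by
  have := nonneg_of_deriv_nonneg (fun u => 1 - u^2/2 + u^4/24 - Real.cos u)
    (fun u => Real.sin u - (u - u^3/6)) ?_ (by norm_num) ?_
  · intro t ht; linarith [this t ht]
  · intro u
    have h := ((((hasDerivAt_const u (1:ℝ)).sub ((hasDerivAt_pow 2 u).div_const 2)).add
      ((hasDerivAt_pow 4 u).div_const 24)).sub (Real.hasDerivAt_cos u))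
    exact h.congr_deriv (by push_cast; ring)
  · intro u hu; linarith [sin_ge_poly3 u hu]

private lemma sin_le_poly5 : ∀ t : ℝ, 0 ≤ t → Real.sin t ≤ t - t^3/6 + t^5/120 := by
  have := nonneg_of_deriv_nonneg (fun u => u - u^3/6 + u^5/120 - Real.sin u)
    (fun u => 1 - u^2/2 + u^4/24 - Real.cos u) ?_ (by norm_num) ?_
  · intro t ht; linarith [this t ht]
  · intro u
    have h := ((((hasDerivAt_id' u).sub ((hasDerivAt_pow 3 u).div_const 6)).add
      ((hasDerivAt_pow 5 u).div_const 120)).sub (Real.hasDerivAt_sin u))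
    exact h.congr_deriv (by push_cast; ring)
  · intro u hu; linarith [cos_le_poly4 u hu]

private lemma cos_ge_poly6 : ∀ t : ℝ, 0 ≤ t → 1 - t^2/2 + t^4/24 - t^6/720 ≤ Real.cos t := by
  have := nonneg_of_deriv_nonneg (fun u => Real.cos u - (1 - u^2/2 + u^4/24 - u^6/720))
    (fun u => (u - u^3/6 + u^5/120) - Real.sin u) ?_ (by norm_num) ?_
  · intro t ht; linarith [this t ht]
  · intro u
    have h := (Real.hasDerivAt_cos u).sub ((((hasDerivAt_const u (1:ℝ)).sub
      ((hasDerivAt_pow 2 u).div_const 2)).add ((hasDerivAt_pow 4 u).div_const 24)).sub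
      ((hasDerivAt_pow 6 u).div_const 720))
    exact h.congr_deriv (by push_cast; ring)
  · intro u hu; linarith [sin_le_poly5 u hu]

private lemma sin_ge_poly7 : ∀ t : ℝ, 0 ≤ t → t - t^3/6 + t^5/120 - t^7/5040 ≤ Real.sin t := by
  have := nonneg_of_deriv_nonneg (fun u => Real.sin u - (u - u^3/6 + u^5/120 - u^7/5040))
    (fun u => Real.cos u - (1 - u^2/2 + u^4/24 - u^6/720)) ?_ (by norm_num) ?_
  · intro t ht; linarith [this t ht]
  · intro u
    have h := (Real.hasDerivAt_sin u).sub (((((hasDerivAt_id' u).sub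
      ((hasDerivAt_pow 3 u).div_const 6)).add ((hasDerivAt_pow 5 u).div_const 120)).sub
      ((hasDerivAt_pow 7 u).div_const 5040)))
    exact h.congr_deriv (by push_cast; ring)
  · intro u hu; linarith [cos_ge_poly6 u hu]

private lemma cos_le_poly8 : ∀ t : ℝ, 0 ≤ t →
    Real.cos t ≤ 1 - t^2/2 + t^4/24 - t^6/720 + t^8/40320 := by
  have := nonneg_of_deriv_nonneg
    (fun u => 1 - u^2/2 + u^4/24 - u^6/720 + u^8/40320 - Real.cos u)
    (fun u => Real.sin u - (u - u^3/6 + u^5/120 - u^7/5040)) ?_ (by norm_num) ?_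
  · intro t ht; linarith [this t ht]
  · intro u
    have h := (((((hasDerivAt_const u (1:ℝ)).sub ((hasDerivAt_pow 2 u).div_const 2)).add
      ((hasDerivAt_pow 4 u).div_const 24)).sub ((hasDerivAt_pow 6 u).div_const 720)).add
      ((hasDerivAt_pow 8 u).div_const 40320)).sub (Real.hasDerivAt_cos u)
    exact h.congr_deriv (by push_cast; ring)
  · intro u hu; linarith [sin_ge_poly7 u hu]

private lemma caseA : ∀ t : ℝ, 0 ≤ t → t ≤ 2 → 69/50 * (1 - Real.cos t) ≤ t := by
  intro t ht0 h2
  have h2' : (0:ℝ) ≤ 2 - t := by linarith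
  have hc := cos_ge_poly6 t ht0
  nlinarith [mul_nonneg (pow_nonneg ht0 1) (pow_nonneg h2' 5),
    mul_nonneg (pow_nonneg ht0 2) (pow_nonneg h2' 4),
    mul_nonneg (pow_nonneg ht0 3) (pow_nonneg h2' 3),
    mul_nonneg (pow_nonneg ht0 4) (pow_nonneg h2' 2),
    mul_nonneg (pow_nonneg ht0 5) (pow_nonneg h2' 1),
    pow_nonneg ht0 6]

private lemma caseB : ∀ s : ℝ, 0 ≤ s → s ≤ 1.1416 → 69/50 * (1 + Real.cos s) ≤ π - s := by
  intro s hs0 hs1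
  have hpi1 : (3.141592 : ℝ) < π := by
    have := Real.pi_gt_d6; norm_num at this ⊢; linarith
  have hcs := cos_le_poly8 s hs0
  have hs1' : (0:ℝ) ≤ 1.1416 - s := by linarith
  nlinarith [sq_nonneg (s - 0.8105), sq_nonneg (s*s - 0.657),
    sq_nonneg (s*(s - 0.8105)), sq_nonneg (s*s*(s - 0.8105)),
    mul_nonneg hs0 hs1',
    mul_nonneg (mul_nonneg hs0 hs0) hs1',
    mul_nonneg (sq_nonneg (s - 0.8105)) (mul_nonneg hs0 hs1'),
    mul_nonneg (sq_nonneg (s*(s - 0.8105))) (mul_nonneg hs0 hs1')]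

/-- Lower half of the linear bound on `sin²` (Appendix G, equation (93) with
`m = 1/1.38`): for `x ∈ [0, π/2]`, `sin²x ≥ 1 + (x − π/2)/1.38`, equivalently
`1.38·cos²x ≤ π/2 − x`. -/
theorem stmt_17 :
    ∀ x ∈ Set.Icc (0:ℝ) (π / 2),
      1 + (x - π / 2) / 1.38 ≤ Real.sin x ^ 2
        ∧ 1.38 * Real.cos x ^ 2 ≤ π / 2 - x := by
  intro x hx
  obtain ⟨hx0, hx2⟩ := hx
  have hpi2 : π < (3.141593 : ℝ) := by
    have := Real.pi_lt_d6; norm_num at this ⊢; linarith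
  have key : 1.38 * Real.cos x ^ 2 ≤ π / 2 - x := by
    have ht0 : 0 ≤ π - 2*x := by linarith
    have hcos : Real.cos x ^ 2 = (1 - Real.cos (π - 2*x))/2 := by
      rw [Real.cos_pi_sub, Real.cos_two_mul]; ring
    rw [hcos]
    rcases le_or_gt (π - 2*x) 2 with h2 | h2
    · have := caseA (π - 2*x) ht0 h2
      norm_num only at this ⊢
      linarith
    · have hs0 : 0 ≤ 2*x := by linarith
      have hs1 : 2*x ≤ 1.1416 := by norm_num at hpi2 ⊢; linarith
      have := caseB (2*x) hs0 hs1
      have hct : Real.cos (π - 2*x) = -Real.cos (2*x) := Real.cos_pi_sub (2*x)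
      rw [hct]
      norm_num only at this ⊢
      linarith
  refine ⟨?_, key⟩
  have hsc := Real.sin_sq_add_cos_sq x
  norm_num only at key ⊢
  linarith [key, hsc]
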